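/- Let a_0 ≥ 2 be a real number and L = c + 1/2 + sqrt(c + 1/4) for c > 0. If n is a natural number with n ≥ log₂(log₂ a_0), then a_0^(1/2^n) ≤ 2, and hence the iterated-radical sequence satisfies a_n ≤ L + 2. -/

import Mathlib

/-! `L` is the fixed point of `x ↦ √x + c`, and `u = L - c = 1/2 + √(c + 1/4)` satisfies
`L ≤ u ^ 2`. Hence `y ≤ x + L` implies `√y + c ≤ √x + L`: one step of the recursion takes the
square root of the leading term and keeps the additive error `L`, so `a n ≤ a₀ ^ (1 / 2 ^ n) + L`.
The leading term is at most `2` once `2 ^ n ≥ log₂ a₀`. -/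

open Real

theorem rpow_one_div_pow_le_of_logb_logb_le {b x : ℝ} (hb : 1 < b) (hx : 1 < x) {n : ℕ}
    (hn : logb b (logb b x) ≤ n) : x ^ (1 / b ^ n) ≤ b := by
  have hlog : logb b x ≤ b ^ n := by
    rwa [← rpow_natCast, ← logb_le_iff_le_rpow hb (logb_pos hb hx)]
  rw [one_div, rpow_inv_le_iff_of_pos (by linarith) (by linarith) (by positivity),
    ← rpow_natCast, ← logb_le_iff_le_rpow hb (by linarith), rpow_natCast]
  exact hlog

theorem sqrt_rpow_one_div_two_pow {x : ℝ} (hx : 0 ≤ x) (n : ℕ) :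
    √(x ^ (1 / (2 : ℝ) ^ n)) = x ^ (1 / (2 : ℝ) ^ (n + 1)) := by
  rw [sqrt_eq_rpow, ← rpow_mul hx, pow_succ]
  ring_nf

theorem sqrt_le_sqrt_add_of_le_add {x y c u : ℝ} (hx : 0 ≤ x) (hu : 0 ≤ u) (hcu : c + u ≤ u ^ 2)
    (hy : y ≤ x + (c + u)) : √y ≤ √x + u := by
  rw [sqrt_le_left (by positivity)]
  nlinarith [sq_sqrt hx, sqrt_nonneg x]

theorem le_rpow_one_div_two_pow_add {c u : ℝ} (hu : 0 ≤ u) (hcu₀ : 0 ≤ c + u)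
    (hcu : c + u ≤ u ^ 2) {a : ℕ → ℝ} (ha0 : 0 ≤ a 0) (ha : ∀ n, a (n + 1) = √(a n) + c) (n : ℕ) :
    a n ≤ a 0 ^ (1 / (2 : ℝ) ^ n) + (c + u) := by
  induction n with
  | zero => simpa using hcu₀
  | succ m ih =>
    have hstep := sqrt_le_sqrt_add_of_le_add (rpow_nonneg ha0 _) hu hcu ih
    rw [sqrt_rpow_one_div_two_pow ha0] at hstep
    rw [ha m]
    linarith

theorem iterated_radicals_convergence_speed (c : ℝ) (hc : 0 < c)
    (L : ℝ) (hL : L = c + 1/2 + Real.sqrt (c + 1/4))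
    (a : ℕ → ℝ) (ha0 : a 0 > max L 2)
    (ha : ∀ n, a (n + 1) = Real.sqrt (a n) + c)
    (n : ℕ) (hn : (n : ℝ) ≥ Real.logb 2 (Real.logb 2 (a 0))) :
    a 0 ^ (1 / (2 : ℝ) ^ n) ≤ 2 ∧ a n ≤ L + 2 := by
  have ha02 : 2 < a 0 := (le_max_right L 2).trans_lt ha0
  have hroot : a 0 ^ (1 / (2 : ℝ) ^ n) ≤ 2 :=
    rpow_one_div_pow_le_of_logb_logb_le one_lt_two (by linarith) hn
  set s := √(c + 1/4)
  have hs : c + 1/4 ≤ s ^ 2 := by rw [sq_sqrt']; exact le_max_left _ _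
  have hcu : c + (1/2 + s) ≤ (1/2 + s) ^ 2 := by nlinarith
  have hbound := le_rpow_one_div_two_pow_add (by positivity) (by positivity) hcu (by linarith) ha n
  exact ⟨hroot, by rw [hL]; linarith⟩
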